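/- arXiv:math/0701559 — 7 statements merged into one kernel-verified Lean document; each statement's English description precedes it below -/
import Mathlib

section
/- Let U be a topological idempotent semigroup, i.e., a topological space with a continuous associative operation ψ : U × U → U satisfying ψ(u,u) = u for all u ∈ U, and let u₀ be an element of the center of (U, ψ), i.e., ψ(u₀,v) = ψ(v,u₀) for all v ∈ U. Then for every k ≥ 1 the k-th homotopy group π_k(U, u₀) is trivial; in particular the fundamental group π₁(U, u₀) is trivial. -/
open Topology Topology.Homotopy GenLoop

section Aux

variable {U : Type*} [TopologicalSpace U] {N : Type*} (ψ : U → U → U)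
  (hcont : Continuous fun p : U × U => ψ p.1 p.2) {u₀ : U} (h0 : ψ u₀ u₀ = u₀)

/-- Pointwise multiplication of generalized loops via `ψ`. -/
def psiMul (f g : Ω^ N U u₀) : Ω^ N U u₀ :=
  ⟨⟨fun t => ψ (f t) (g t), hcont.comp ((map_continuous f.1).prodMk (map_continuous g.1))⟩,
   fun y hy => by
    show ψ (f y) (g y) = u₀
    rw [GenLoop.boundary f y hy, GenLoop.boundary g y hy, h0]⟩

@[simp] theorem psiMul_apply (f g : Ω^ N U u₀) (t : N → unitInterval) :
    psiMul ψ hcont h0 f g t = ψ (f t) (g t) := rfl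

theorem psiMul_homotopic {f₁ f₂ g₁ g₂ : Ω^ N U u₀} (h₁ : Homotopic f₁ f₂)
    (h₂ : Homotopic g₁ g₂) :
    Homotopic (psiMul ψ hcont h0 f₁ g₁) (psiMul ψ hcont h0 f₂ g₂) := by
  obtain ⟨H₁⟩ := h₁
  obtain ⟨H₂⟩ := h₂
  exact ⟨⟨⟨⟨fun p => ψ (H₁ p) (H₂ p),
      hcont.comp (H₁.continuous.prodMk H₂.continuous)⟩,
      fun y => by simp, fun y => by simp⟩,
      fun t y hy => by
        simp only [ContinuousMap.coe_mk]
        rw [H₁.eq_fst t hy, H₂.eq_fst t hy]; rfl⟩⟩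

/-- Pointwise multiplication descended to the homotopy group. -/
def psiMulQ : HomotopyGroup N U u₀ → HomotopyGroup N U u₀ → HomotopyGroup N U u₀ :=
  Quotient.map₂ (psiMul ψ hcont h0) fun _ _ h₁ _ _ h₂ => psiMul_homotopic ψ hcont h0 h₁ h₂

theorem psiMulQ_mk (f g : Ω^ N U u₀) :
    psiMulQ ψ hcont h0 (⟦f⟧ : HomotopyGroup N U u₀) ⟦g⟧ = ⟦psiMul ψ hcont h0 f g⟧ := rfl

end Aux

/-- If `(U, ψ)` is a topological idempotent semigroup and `u₀` lies in its center,
then all homotopy groups `π_k(U, u₀)`, `k ≥ 1`, are trivial. -/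
theorem homotopyGroup_trivial_of_idempotent_semigroup
    {U : Type*} [TopologicalSpace U] (ψ : U → U → U)
    (hcont : Continuous fun p : U × U => ψ p.1 p.2)
    (hassoc : ∀ u v w : U, ψ u (ψ v w) = ψ (ψ u v) w)
    (hidem : ∀ u : U, ψ u u = u)
    (u₀ : U) (hcenter : ∀ v : U, ψ u₀ v = ψ v u₀) :
    ∀ k : ℕ, 1 ≤ k → Subsingleton (HomotopyGroup (Fin k) U u₀) := by
  intro k hk
  haveI : Nonempty (Fin k) := ⟨⟨0, hk⟩⟩
  set i : Fin k := ⟨0, hk⟩ with hi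
  have h0 : ψ u₀ u₀ = u₀ := hidem u₀
  set op : HomotopyGroup (Fin k) U u₀ → HomotopyGroup (Fin k) U u₀ →
      HomotopyGroup (Fin k) U u₀ := psiMulQ ψ hcont h0 with hop
  -- idempotency
  have hidemQ : ∀ a, op a a = a := by
    refine Quotient.ind fun f => ?_
    rw [hop, psiMulQ_mk]
    exact congrArg _ (GenLoop.ext _ _ fun t => hidem (f t))
  -- associativity
  have hassocQ : ∀ a b c, op (op a b) c = op a (op b c) := by
    refine Quotient.ind fun f => Quotient.ind fun g => Quotient.ind fun h => ?_
    simp only [hop, psiMulQ_mk]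
    exact congrArg _ (GenLoop.ext _ _ fun t => (hassoc (f t) (g t) (h t)).symm)
  -- centrality of the constant loop
  have hswapQ : ∀ a, op 1 a = op a 1 := by
    refine Quotient.ind fun f => ?_
    rw [HomotopyGroup.one_def, hop, psiMulQ_mk, psiMulQ_mk]
    exact congrArg _ (GenLoop.ext _ _ fun t => hcenter (f t))
  -- interchange law
  have hintQ : ∀ a b c d, op (a * b) (c * d) = op a c * op b d := by
    refine Quotient.ind fun f => Quotient.ind fun g => Quotient.ind fun p =>
      Quotient.ind fun q => ?_
    simp only [HomotopyGroup.mul_spec (i := i), hop, psiMulQ_mk]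
    refine congrArg _ (GenLoop.ext _ _ fun t => ?_)
    show ψ (transAt i g f t) (transAt i q p t) =
      transAt i (psiMul ψ hcont h0 g q) (psiMul ψ hcont h0 f p) t
    simp only [transAt, coe_copy, psiMul_apply]
    split_ifs <;> rfl
  -- Eckmann–Hilton style algebra
  have key : ∀ a : HomotopyGroup (Fin k) U u₀, a = 1 := by
    have h1 : ∀ a : HomotopyGroup (Fin k) U u₀, a = op 1 a * op 1 a := fun a => by
      conv_lhs => rw [← hidemQ a]
      calc op a a = op (a * 1) (1 * a) := by rw [mul_one, one_mul]
        _ = op a 1 * op 1 a := hintQ a 1 1 a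
        _ = op 1 a * op 1 a := by rw [hswapQ]
    have hinj : ∀ a b, op 1 a = op 1 b → a = b := fun a b h => by
      rw [h1 a, h1 b, h]
    have hfa : ∀ a, op 1 a = a := fun a => by
      refine hinj _ _ ?_
      rw [← hassocQ, hidemQ]
    intro a
    have := h1 a
    rw [hfa] at this
    have : a * 1 = a * a := by rw [mul_one]; exact this
    exact (mul_left_cancel this).symm
  exact ⟨fun a b => (key a).trans (key b).symm⟩
end

section
/- Let f be a simple tropical polynomial in n variables, regarded as the function f(u) = max_{ω ∈ Ω} (⟨ω, u⟩ + A(ω)) on ℝⁿ, where every exponent vector ω ∈ Ω has at most one nonzero coordinate. Then f commutes with coordinatewise maxima: for all u, v ∈ ℝⁿ, f(u ⊕ v) = max(f(u), f(v)), where u ⊕ v denotes the coordinatewise maximum of u and v. -/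
/-- A tropical polynomial in `n` variables: a finite nonempty set of exponent
vectors in `ℕⁿ` together with real coefficients. -/
structure TropPoly (n : ℕ) where
  supp : Finset (Fin n → ℕ)
  supp_nonempty : supp.Nonempty
  coeff : (Fin n → ℕ) → ℝ

namespace TropPoly

variable {n : ℕ}

/-- The value at `u` of the monomial of exponent `ω`. -/
def mono (f : TropPoly n) (ω : Fin n → ℕ) (u : Fin n → ℝ) : ℝ :=
  (∑ i, (ω i : ℝ) * u i) + f.coeff ω

/-- The piecewise-linear convex function defined by a tropical polynomial:
`f(u) = max_{ω ∈ Ω} (⟨ω, u⟩ + A(ω))`. -/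
def eval (f : TropPoly n) (u : Fin n → ℝ) : ℝ :=
  f.supp.sup' f.supp_nonempty (fun ω => f.mono ω u)

/-- The corner locus of a tropical polynomial: the set of points where the
maximum is attained by at least two distinct exponent vectors. -/
def Z (f : TropPoly n) : Set (Fin n → ℝ) :=
  {u | ∃ ω ∈ f.supp, ∃ τ ∈ f.supp, ω ≠ τ ∧
    f.mono ω u = f.eval u ∧ f.mono τ u = f.eval u}

/-- A tropical polynomial is simple if every exponent vector has at most one
nonzero coordinate (i.e., all monomials are univariate or constant). -/
def Simple (f : TropPoly n) : Prop :=
  ∀ ω ∈ f.supp, ∀ i j : Fin n, ω i ≠ 0 → ω j ≠ 0 → i = j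

end TropPoly

lemma mono_sup_key {n : ℕ} (f : TropPoly n) (ω : Fin n → ℕ)
    (hω : ∀ i j : Fin n, ω i ≠ 0 → ω j ≠ 0 → i = j) (u v : Fin n → ℝ) :
    f.mono ω (u ⊔ v) = max (f.mono ω u) (f.mono ω v) := by
  unfold TropPoly.mono
  rw [max_add_add_right]
  congr 1
  by_cases h : ∀ i, ω i = 0
  · simp [h]
  · push_neg at h
    obtain ⟨i₀, hi₀⟩ := h
    have hz : ∀ j, j ≠ i₀ → (ω j : ℝ) * (u ⊔ v) j = 0 := by
      intro j hj
      have : ω j = 0 := by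
        by_contra hc
        exact hj (hω j i₀ hc hi₀)
      simp [this]
    have hzu : ∀ j, j ≠ i₀ → (ω j : ℝ) * u j = 0 := by
      intro j hj
      have : ω j = 0 := by
        by_contra hc
        exact hj (hω j i₀ hc hi₀)
      simp [this]
    have hzv : ∀ j, j ≠ i₀ → (ω j : ℝ) * v j = 0 := by
      intro j hj
      have : ω j = 0 := by
        by_contra hc
        exact hj (hω j i₀ hc hi₀)
      simp [this]
    rw [Finset.sum_eq_single i₀ (fun j _ hj => hz j hj) (by simp),
        Finset.sum_eq_single i₀ (fun j _ hj => hzu j hj) (by simp),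
        Finset.sum_eq_single i₀ (fun j _ hj => hzv j hj) (by simp)]
    have : (u ⊔ v) i₀ = max (u i₀) (v i₀) := rfl
    rw [this, mul_max_of_nonneg _ _ (by positivity : (0:ℝ) ≤ (ω i₀ : ℝ))]

/-- A simple tropical polynomial commutes with coordinatewise maxima:
`f(u ⊔ v) = max (f u) (f v)`. -/
theorem TropPoly.eval_sup_of_simple {n : ℕ} (f : TropPoly n) (hf : f.Simple)
    (u v : Fin n → ℝ) :
    f.eval (u ⊔ v) = max (f.eval u) (f.eval v) := by
  have key : ∀ ω ∈ f.supp, f.mono ω (u ⊔ v) = max (f.mono ω u) (f.mono ω v) :=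
    fun ω hω => mono_sup_key f ω (hf ω hω) u v
  unfold TropPoly.eval
  apply le_antisymm
  · apply Finset.sup'_le
    intro ω hω
    rw [key ω hω]
    exact max_le_max (Finset.le_sup' (fun ω => f.mono ω u) hω) (Finset.le_sup' (fun ω => f.mono ω v) hω)
  · apply max_le <;>
    · apply Finset.sup'_le
      intro ω hω
      refine le_trans ?_ (Finset.le_sup' _ hω)
      rw [key ω hω]
      simp
end

section
/- Let f₁, …, f_s be simple tropical polynomials in n variables. Then the set Z(f₁) ∩ ⋯ ∩ Z(f_s) ⊆ ℝⁿ, the intersection of their corner loci, is additive, i.e., closed under the coordinatewise maximum: if u and v belong to every Z(f_i), then so does u ⊕ v. -/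
/-!
A monomial of a simple tropical polynomial depends on a single coordinate, monotonically, so it
commutes with `⊕`; hence so does `f` itself: `f (u ⊕ v) = f u ⊔ f v`. If, say, `f v ≤ f u`, the two
monomials attaining the maximum at `u` then still attain it at `u ⊕ v`. So every `Z(fᵢ)` is
additive, and so is their intersection.
-/

theorem Finset.sup'_sup {α β : Type*} [SemilatticeSup α] {s : Finset β} (H : s.Nonempty)
    (f g : β → α) : s.sup' H (f ⊔ g) = s.sup' H f ⊔ s.sup' H g :=
  le_antisymm
    (sup'_le _ _ fun _ hb => sup_le_sup (le_sup' f hb) (le_sup' g hb))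
    (sup_le (sup'_mono_fun fun _ _ => le_sup_left) (sup'_mono_fun fun _ _ => le_sup_right))

theorem Finset.sum_natCast_mul_sup {ι : Type*} [Fintype ι] {ω : ι → ℕ}
    (hω : ∀ i j, ω i ≠ 0 → ω j ≠ 0 → i = j) (u v : ι → ℝ) :
    ∑ i, (ω i : ℝ) * (u ⊔ v) i = (∑ i, (ω i : ℝ) * u i) ⊔ ∑ i, (ω i : ℝ) * v i := by
  by_cases hzero : ∀ i, ω i = 0
  · simp [hzero]
  obtain ⟨i₀, hi₀⟩ := not_forall.mp hzero
  have hsingle (x : ι → ℝ) : ∑ i, (ω i : ℝ) * x i = ω i₀ * x i₀ :=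
    sum_eq_single i₀ (fun j _ hj => by simp [not_imp_comm.mp (hω j i₀ · hi₀) hj]) (by simp)
  rw [hsingle, hsingle, hsingle, Pi.sup_apply, mul_max_of_nonneg _ _ (Nat.cast_nonneg _)]

namespace TropPoly

variable {n : ℕ} {f : TropPoly n}

theorem mono_sup {ω : Fin n → ℕ} (hω : ∀ i j, ω i ≠ 0 → ω j ≠ 0 → i = j) (u v : Fin n → ℝ) :
    f.mono ω (u ⊔ v) = f.mono ω u ⊔ f.mono ω v := by
  rw [mono, mono, mono, Finset.sum_natCast_mul_sup hω, max_add_add_right]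

theorem mono_le_eval {ω : Fin n → ℕ} (hω : ω ∈ f.supp) (u : Fin n → ℝ) :
    f.mono ω u ≤ f.eval u :=
  Finset.le_sup' (f.mono · u) hω

theorem eval_sup (hf : f.Simple) (u v : Fin n → ℝ) :
    f.eval (u ⊔ v) = f.eval u ⊔ f.eval v := by
  rw [eval, Finset.sup'_congr f.supp_nonempty rfl fun ω hω => mono_sup (hf ω hω) u v]
  exact Finset.sup'_sup _ _ _

theorem sup_mem_Z_of_eval_le (hf : f.Simple) {u v : Fin n → ℝ} (hu : u ∈ f.Z)
    (hvu : f.eval v ≤ f.eval u) : u ⊔ v ∈ f.Z := by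
  obtain ⟨ω, hω, τ, hτ, hne, hωu, hτu⟩ := hu
  have hmax {σ} (hσ : σ ∈ f.supp) (hσu : f.mono σ u = f.eval u) :
      f.mono σ (u ⊔ v) = f.eval (u ⊔ v) := by
    rw [mono_sup (hf σ hσ), eval_sup hf, hσu, sup_eq_left.mpr hvu,
      sup_eq_left.mpr ((mono_le_eval hσ v).trans hvu)]
  exact ⟨ω, hω, τ, hτ, hne, hmax hω hωu, hmax hτ hτu⟩

theorem sup_mem_Z (hf : f.Simple) {u v : Fin n → ℝ} (hu : u ∈ f.Z) (hv : v ∈ f.Z) :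
    u ⊔ v ∈ f.Z := by
  rcases le_total (f.eval v) (f.eval u) with hvu | huv
  · exact sup_mem_Z_of_eval_le hf hu hvu
  · exact sup_comm v u ▸ sup_mem_Z_of_eval_le hf hv huv

end TropPoly

/-- The intersection of the corner loci of finitely many simple tropical
polynomials is closed under coordinatewise maximum. -/
theorem TropPoly.inter_Z_additive_of_simple {n s : ℕ} (f : Fin s → TropPoly n)
    (hf : ∀ i, (f i).Simple) (u v : Fin n → ℝ)
    (hu : ∀ i, u ∈ (f i).Z) (hv : ∀ i, v ∈ (f i).Z) :
    ∀ i, u ⊔ v ∈ (f i).Z :=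
  fun i => sup_mem_Z (hf i) (hu i) (hv i)
end

section
/- Let f₁, …, f_s and g₁, …, g_s be tropical polynomials in n variables, and let f = (g₁ ⊙ f₁) ⊕ ⋯ ⊕ (g_s ⊙ f_s) be the tropical polynomial whose support is the set of all sums μ + ω with μ in the support of some g_i and ω in the support of the corresponding f_i, the coefficient of f at an exponent σ being the maximum of B_i(μ) + A_i(ω) over all such decompositions σ = μ + ω. If a point u ∈ ℝⁿ lies in the corner locus Z(f_i) for every i = 1, …, s, then u lies in the corner locus Z(f). In particular, the tropical algebraic set of the ideal generated by f₁, …, f_s equals Z(f₁) ∩ ⋯ ∩ Z(f_s). -/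
/-- If `f = (g₁ ⊙ f₁) ⊕ ⋯ ⊕ (g_s ⊙ f_s)` is the tropical polynomial whose support
consists of all sums `μ + ω` with `μ` in the support of some `gᵢ` and `ω` in the
support of the corresponding `fᵢ`, the coefficient at `σ` being the maximum of
`Bᵢ(μ) + Aᵢ(ω)` over all such decompositions `σ = μ + ω`, then every point lying
in all the corner loci `Z(fᵢ)` lies in the corner locus `Z(f)`. -/
theorem TropPoly.mem_Z_of_combination {n s : ℕ}
    (fs g : Fin s → TropPoly n) (f : TropPoly n)
    (hsupp : f.supp = Finset.univ.biUnion
      (fun i => ((g i).supp ×ˢ (fs i).supp).image (fun p => p.1 + p.2)))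
    (hcoeff_le : ∀ σ ∈ f.supp, ∀ i : Fin s, ∀ μ ∈ (g i).supp, ∀ ω ∈ (fs i).supp,
      μ + ω = σ → (g i).coeff μ + (fs i).coeff ω ≤ f.coeff σ)
    (hcoeff_eq : ∀ σ ∈ f.supp, ∃ i : Fin s, ∃ μ ∈ (g i).supp, ∃ ω ∈ (fs i).supp,
      μ + ω = σ ∧ f.coeff σ = (g i).coeff μ + (fs i).coeff ω)
    (u : Fin n → ℝ) (hu : ∀ i, u ∈ (fs i).Z) :
    u ∈ f.Z := by
  classical
  obtain ⟨σ, hσ, hσeval⟩ := f.supp.exists_mem_eq_sup' f.supp_nonempty (fun ω => f.mono ω u)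
  obtain ⟨i, μ, hμ, ω, hω, hsum, hc⟩ := hcoeff_eq σ hσ
  obtain ⟨ω₁, hω₁, ω₂, hω₂, hne, h1, h2⟩ := hu i
  have split : ∀ (a b : Fin n → ℕ) (ca cb : ℝ),
      (∑ j, (((a + b) j : ℕ) : ℝ) * u j) + (ca + cb)
        = ((∑ j, (a j : ℝ) * u j) + ca) + ((∑ j, (b j : ℝ) * u j) + cb) := by
    intro a b ca cb
    have : (∑ j, (((a + b) j : ℕ) : ℝ) * u j)
        = (∑ j, (a j : ℝ) * u j) + (∑ j, (b j : ℝ) * u j) := by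
      rw [← Finset.sum_add_distrib]
      refine Finset.sum_congr rfl fun j _ => ?_
      push_cast [Pi.add_apply]
      ring
    rw [this]; ring
  have hmem : ∀ ω' ∈ (fs i).supp, μ + ω' ∈ f.supp := by
    intro ω' hω'
    rw [hsupp]
    refine Finset.mem_biUnion.2 ⟨i, Finset.mem_univ i, Finset.mem_image.2
      ⟨(μ, ω'), Finset.mem_product.2 ⟨hμ, hω'⟩, rfl⟩⟩
  have hσeval' : f.eval u = f.mono σ u := hσeval
  have key : ∀ ω' ∈ (fs i).supp, (fs i).mono ω' u = (fs i).eval u →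
      f.mono (μ + ω') u = f.eval u := by
    intro ω' hω' hmax
    refine le_antisymm (Finset.le_sup' (fun τ => f.mono τ u) (hmem ω' hω')) ?_
    have hle : (g i).coeff μ + (fs i).coeff ω' ≤ f.coeff (μ + ω') :=
      hcoeff_le (μ + ω') (hmem ω' hω') i μ hμ ω' hω' rfl
    have h1 : (g i).mono μ u + (fs i).mono ω' u ≤ f.mono (μ + ω') u := by
      unfold TropPoly.mono
      rw [← split]
      exact add_le_add_right hle _
    have h2 : f.eval u ≤ (g i).mono μ u + (fs i).mono ω' u := by
      rw [hσeval']
      have : f.mono σ u = (g i).mono μ u + (fs i).mono ω u := by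
        unfold TropPoly.mono
        rw [← split, hsum, hc]
      rw [this, hmax]
      exact add_le_add_right (Finset.le_sup' (fun τ => (fs i).mono τ u) hω) _
    exact h2.trans h1
  refine ⟨μ + ω₁, hmem ω₁ hω₁, μ + ω₂, hmem ω₂ hω₂, ?_, key ω₁ hω₁ h1, key ω₂ hω₂ h2⟩
  intro h
  apply hne
  funext j
  have := congrFun h j
  simpa using Nat.add_left_cancel this
end

section
/- Let R = {(t, 0) : t ≥ 0} ⊆ ℝ². Let f₁ be the tropical polynomial in two variables with support {(1,1), (1,0), (0,1)} and all coefficients 0 (so f₁(x,y) = max(x + y, x, y)), and let f₂ be the tropical polynomial with support {(1,1), (1,0), (0,1)} and coefficients 0, 0, −1 respectively (so f₂(x,y) = max(x + y, x, y − 1)). Then R = Z(f₁) ∩ Z(f₂); in particular, R is additive, i.e., closed under coordinatewise maximum. -/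
/-- The tropical polynomial `f₁(x,y) = max (x + y) (max x y)` (support
`{(1,1),(1,0),(0,1)}`, all coefficients `0`). -/
def tropF₁ : TropPoly 2 where
  supp := {![1,1], ![1,0], ![0,1]}
  supp_nonempty := Finset.insert_nonempty _ _
  coeff := fun _ => 0

/-- The tropical polynomial `f₂(x,y) = max (x + y) (max x (y - 1))` (support
`{(1,1),(1,0),(0,1)}`, coefficients `0, 0, -1`). -/
def tropF₂ : TropPoly 2 where
  supp := {![1,1], ![1,0], ![0,1]}
  supp_nonempty := Finset.insert_nonempty _ _
  coeff := fun ω => if ω = ![0,1] then (-1 : ℝ) else 0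

section Helpers

lemma vne₁ : ![1,1] ≠ (![1,0] : Fin 2 → ℕ) := by decide
lemma vne₂ : ![1,1] ≠ (![0,1] : Fin 2 → ℕ) := by decide
lemma vne₃ : ![1,0] ≠ (![0,1] : Fin 2 → ℕ) := by decide

lemma coeff₂a : tropF₂.coeff ![1,1] = 0 := by simp [tropF₂, vne₂]
lemma coeff₂b : tropF₂.coeff ![1,0] = 0 := by simp [tropF₂, vne₃]
lemma coeff₂c : tropF₂.coeff ![0,1] = -1 := by simp [tropF₂]

lemma mono₁a (u : Fin 2 → ℝ) : tropF₁.mono ![1,1] u = u 0 + u 1 := by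
  simp [TropPoly.mono, tropF₁, Fin.sum_univ_two]
lemma mono₁b (u : Fin 2 → ℝ) : tropF₁.mono ![1,0] u = u 0 := by
  simp [TropPoly.mono, tropF₁, Fin.sum_univ_two]
lemma mono₁c (u : Fin 2 → ℝ) : tropF₁.mono ![0,1] u = u 1 := by
  simp [TropPoly.mono, tropF₁, Fin.sum_univ_two]
lemma mono₂a (u : Fin 2 → ℝ) : tropF₂.mono ![1,1] u = u 0 + u 1 := by
  simp [TropPoly.mono, coeff₂a, Fin.sum_univ_two]
lemma mono₂b (u : Fin 2 → ℝ) : tropF₂.mono ![1,0] u = u 0 := by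
  simp [TropPoly.mono, coeff₂b, Fin.sum_univ_two]
lemma mono₂c (u : Fin 2 → ℝ) : tropF₂.mono ![0,1] u = u 1 - 1 := by
  simp [TropPoly.mono, coeff₂c, Fin.sum_univ_two]; ring

lemma memsupp₁ : (![1,1] ∈ tropF₁.supp) ∧ (![1,0] ∈ tropF₁.supp) ∧ (![0,1] ∈ tropF₁.supp) := by
  refine ⟨?_, ?_, ?_⟩ <;> simp [tropF₁]
lemma memsupp₂ : (![1,1] ∈ tropF₂.supp) ∧ (![1,0] ∈ tropF₂.supp) ∧ (![0,1] ∈ tropF₂.supp) := by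
  refine ⟨?_, ?_, ?_⟩ <;> simp [tropF₂]

lemma key₁ (u : Fin 2 → ℝ) (h : u ∈ tropF₁.Z) :
    (u 1 = 0 ∧ u 1 ≤ u 0) ∨ (u 0 = 0 ∧ u 0 ≤ u 1) ∨ (u 0 = u 1 ∧ u 1 ≤ 0) := by
  obtain ⟨ω, hω, τ, hτ, hne, h1, h2⟩ := h
  have hA : u 0 + u 1 ≤ tropF₁.eval u := by
    rw [← mono₁a u]; exact Finset.le_sup' (fun ω => tropF₁.mono ω u) memsupp₁.1
  have hB : u 0 ≤ tropF₁.eval u := by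
    rw [← mono₁b u]; exact Finset.le_sup' (fun ω => tropF₁.mono ω u) memsupp₁.2.1
  have hC : u 1 ≤ tropF₁.eval u := by
    rw [← mono₁c u]; exact Finset.le_sup' (fun ω => tropF₁.mono ω u) memsupp₁.2.2
  simp only [tropF₁, Finset.mem_insert, Finset.mem_singleton] at hω hτ
  rcases hω with rfl | rfl | rfl <;> rcases hτ with rfl | rfl | rfl <;>
    first
    | exact absurd rfl hne
    | (simp only [mono₁a, mono₁b, mono₁c] at h1 h2
       first
       | exact Or.inl ⟨by linarith, by linarith⟩
       | exact Or.inr (Or.inl ⟨by linarith, by linarith⟩)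
       | exact Or.inr (Or.inr ⟨by linarith, by linarith⟩))

lemma key₂ (u : Fin 2 → ℝ) (h : u ∈ tropF₂.Z) :
    (u 1 = 0) ∨ (u 0 = -1 ∧ 0 ≤ u 1) ∨ (u 0 = u 1 - 1 ∧ u 1 ≤ 0) := by
  obtain ⟨ω, hω, τ, hτ, hne, h1, h2⟩ := h
  have hA : u 0 + u 1 ≤ tropF₂.eval u := by
    rw [← mono₂a u]; exact Finset.le_sup' (fun ω => tropF₂.mono ω u) memsupp₂.1
  have hB : u 0 ≤ tropF₂.eval u := by
    rw [← mono₂b u]; exact Finset.le_sup' (fun ω => tropF₂.mono ω u) memsupp₂.2.1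
  have hC : u 1 - 1 ≤ tropF₂.eval u := by
    rw [← mono₂c u]; exact Finset.le_sup' (fun ω => tropF₂.mono ω u) memsupp₂.2.2
  simp only [tropF₂, Finset.mem_insert, Finset.mem_singleton] at hω hτ
  rcases hω with rfl | rfl | rfl <;> rcases hτ with rfl | rfl | rfl <;>
    first
    | exact absurd rfl hne
    | (simp only [mono₂a, mono₂b, mono₂c] at h1 h2
       first
       | exact Or.inl (by linarith)
       | exact Or.inr (Or.inl ⟨by linarith, by linarith⟩)
       | exact Or.inr (Or.inr ⟨by linarith, by linarith⟩))

end Helpers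

/-- The horizontal ray `R = {(t,0) : t ≥ 0} ⊆ ℝ²` equals `Z(f₁) ∩ Z(f₂)`;
in particular it is closed under coordinatewise maximum. -/
theorem ray_eq_Z_inter_Z_and_additive :
    ({u : Fin 2 → ℝ | 0 ≤ u 0 ∧ u 1 = 0} = tropF₁.Z ∩ tropF₂.Z) ∧
    (∀ u v : Fin 2 → ℝ, (0 ≤ u 0 ∧ u 1 = 0) → (0 ≤ v 0 ∧ v 1 = 0) →
      0 ≤ (u ⊔ v) 0 ∧ (u ⊔ v) 1 = 0) := by
  constructor
  · ext u
    simp only [Set.mem_setOf_eq, Set.mem_inter_iff]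
    constructor
    · rintro ⟨h0, h1⟩
      have he₁ : tropF₁.eval u = u 0 := by
        rw [TropPoly.eval]
        show ({![1,1], ![1,0], ![0,1]} : Finset (Fin 2 → ℕ)).sup' _ _ = _
        rw [Finset.sup'_insert, Finset.sup'_insert, Finset.sup'_singleton,
          mono₁a, mono₁b, mono₁c, h1, add_zero, max_eq_left h0, sup_idem]
        all_goals simp
      have he₂ : tropF₂.eval u = u 0 := by
        rw [TropPoly.eval]
        show ({![1,1], ![1,0], ![0,1]} : Finset (Fin 2 → ℕ)).sup' _ _ = _
        rw [Finset.sup'_insert, Finset.sup'_insert, Finset.sup'_singleton,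
          mono₂a, mono₂b, mono₂c, h1, add_zero,
          max_eq_left (show (0:ℝ) - 1 ≤ u 0 by linarith), sup_idem]
        all_goals simp
      refine ⟨⟨![1,1], memsupp₁.1, ![1,0], memsupp₁.2.1, vne₁, ?_, ?_⟩,
        ⟨![1,1], memsupp₂.1, ![1,0], memsupp₂.2.1, vne₁, ?_, ?_⟩⟩ <;>
        simp only [mono₁a, mono₁b, mono₂a, mono₂b, he₁, he₂, h1, add_zero]
    · rintro ⟨hz1, hz2⟩
      have k1 := key₁ u hz1
      have k2 := key₂ u hz2
      rcases k1 with ⟨h, h'⟩ | ⟨h, h'⟩ | ⟨h, h'⟩ <;>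
        rcases k2 with h2 | ⟨h2, h2'⟩ | ⟨h2, h2'⟩ <;>
        constructor <;> linarith
  · intro u v ⟨hu0, hu1⟩ ⟨hv0, hv1⟩
    refine ⟨le_sup_of_le_left hu0, ?_⟩
    show max (u 1) (v 1) = 0
    rw [hu1, hv1, max_self]
end

section
/- Let a, b ∈ ℝⁿ and suppose there exist indices i ≠ j with a_i < b_i and a_j > b_j. Then the set {x ⊕ y : x, y ∈ [a, b]}, where [a, b] = {(1−t)a + tb : t ∈ [0,1]} and ⊕ is the coordinatewise maximum, contains the image of an injective affine map from the two-dimensional triangle {(s, t) ∈ ℝ² : 0 ≤ s ≤ t ≤ 1} into ℝⁿ. In particular, any subset of ℝⁿ closed under coordinatewise maximum and containing the segment [a, b] contains a two-dimensional convex subset. -/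
open AffineMap

section

variable {𝕜 ι : Type*} [Field 𝕜] [LinearOrder 𝕜]

theorem lineMap_sup_lineMap_of_le [IsStrictOrderedRing 𝕜] {a b s t : 𝕜} (hst : s ≤ t) :
    lineMap a b s ⊔ lineMap a b t = lineMap a b (if a < b then t else s) := by
  rcases hst.eq_or_lt with rfl | hlt
  · simp
  split_ifs with hab
  · exact sup_eq_right.2 ((lineMap_le_lineMap_iff_of_lt hlt).2 hab.le)
  · exact sup_eq_left.2 ((lineMap_le_lineMap_iff_of_lt (E := 𝕜ᵒᵈ) hlt).2 (not_lt.1 hab))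

/-- On `s ≤ t` the map `(s, t) ↦ lineMap a b s ⊔ lineMap a b t` is affine: coordinates increasing
from `a` to `b` follow `t`, the others follow `s`. -/
noncomputable def supLineMap (a b : ι → 𝕜) : 𝕜 × 𝕜 →ᵃ[𝕜] (ι → 𝕜) :=
  AffineMap.pi fun k => (lineMap (a k) (b k)).comp (if a k < b k then snd else fst)

theorem supLineMap_apply (a b : ι → 𝕜) (p : 𝕜 × 𝕜) (k : ι) :
    supLineMap a b p k = lineMap (a k) (b k) (if a k < b k then p.2 else p.1) := by
  simp only [supLineMap, pi_apply, comp_apply]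
  split_ifs <;> rfl

theorem supLineMap_eq_sup [IsStrictOrderedRing 𝕜] (a b : ι → 𝕜) {p : 𝕜 × 𝕜} (hp : p.1 ≤ p.2) :
    supLineMap a b p = lineMap a b p.1 ⊔ lineMap a b p.2 := by
  funext k
  rw [supLineMap_apply, Pi.sup_apply, pi_lineMap_apply, pi_lineMap_apply,
    lineMap_sup_lineMap_of_le hp]

theorem supLineMap_injective {a b : ι → 𝕜} {i j : ι} (hi : a i < b i) (hj : b j < a j) :
    Function.Injective (supLineMap a b) := by
  intro p q hpq
  have hpq_i := congrFun hpq i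
  have hpq_j := congrFun hpq j
  rw [supLineMap_apply, supLineMap_apply, if_pos hi, if_pos hi] at hpq_i
  rw [supLineMap_apply, supLineMap_apply, if_neg hj.not_gt, if_neg hj.not_gt] at hpq_j
  exact Prod.ext (lineMap_injective 𝕜 hj.ne' hpq_j) (lineMap_injective 𝕜 hi.ne hpq_i)

end

/-- If a segment `[a,b]` in `ℝⁿ` has two coordinates varying in opposite
directions, then the set of coordinatewise maxima of pairs of its points contains
the image of an injective affine map of a two-dimensional triangle. -/
theorem sup_segment_contains_triangle {n : ℕ} (a b : Fin n → ℝ)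
    (h : ∃ i j : Fin n, i ≠ j ∧ a i < b i ∧ a j > b j) :
    ∃ φ : (ℝ × ℝ) →ᵃ[ℝ] (Fin n → ℝ),
      Set.InjOn φ {p : ℝ × ℝ | 0 ≤ p.1 ∧ p.1 ≤ p.2 ∧ p.2 ≤ 1} ∧
      φ '' {p : ℝ × ℝ | 0 ≤ p.1 ∧ p.1 ≤ p.2 ∧ p.2 ≤ 1} ⊆
        {z : Fin n → ℝ | ∃ x ∈ segment ℝ a b, ∃ y ∈ segment ℝ a b, z = x ⊔ y} := by
  obtain ⟨i, j, -, hi, hj⟩ := h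
  refine ⟨supLineMap a b, (supLineMap_injective hi hj).injOn, ?_⟩
  rintro _ ⟨p, ⟨hs, hst, ht⟩, rfl⟩
  exact ⟨_, lineMap_mem_segment ℝ a b ⟨hs, hst.trans ht⟩,
    _, lineMap_mem_segment ℝ a b ⟨hs.trans hst, ht⟩, supLineMap_eq_sup a b hst⟩
end

section
/- Let v, w ∈ ℝⁿ be linearly independent vectors all of whose coordinates are nonnegative, and let a ∈ ℝⁿ. Then the set {(a + s·v) ⊕ (a + t·w) : s, t ≥ 0}, where ⊕ denotes the coordinatewise maximum, contains the image of an injective continuous map from the closed unit square [0,1]² into ℝⁿ (hence a subset homeomorphic to [0,1]²). In particular, any subset of ℝⁿ closed under coordinatewise maximum that contains the two rays {a + s·v : s ≥ 0} and {a + t·w : t ≥ 0} contains a subset homeomorphic to a closed 2-dimensional square. -/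
/-!
Since `v` and `w` are linearly independent, some 2 × 2 minor `v i * w j - v j * w i` is positive.
In the region of parameters `(s, t)` where the `v`-ray wins the maximum in coordinate `i` and the
`w`-ray wins it in coordinate `j`, the map `(s, t) ↦ (a + s • v) ⊔ (a + t • w)` reads off `s` from
coordinate `i` and `t` from coordinate `j`, so it is injective there. This region is a cone with
nonempty interior, so it contains a translate of the unit square.
-/

open Set

variable {ι : Type*}

theorem exists_mul_lt_mul_of_linearIndependent {K : Type*} [Field K] [LinearOrder K]
    [IsStrictOrderedRing K] {v w : ι → K} (hvw : LinearIndependent K ![v, w]) :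
    ∃ i j, v j * w i < v i * w j := by
  by_contra! hle
  rw [LinearIndependent.pair_iff] at hvw
  have hw : w = 0 := funext fun k =>
    (hvw (w k) (-v k) (funext fun m => by
      simp only [Pi.add_apply, Pi.smul_apply, smul_eq_mul, Pi.zero_apply]
      linarith [hle m k, hle k m])).1
  exact one_ne_zero (hvw 0 1 (by simp [hw])).2

def supRays (a v w : ι → ℝ) (p : ℝ × ℝ) : ι → ℝ :=
  (a + p.1 • v) ⊔ (a + p.2 • w)

theorem continuous_supRays (a v w : ι → ℝ) : Continuous (supRays a v w) :=
  continuous_pi fun k => by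
    simp only [supRays, Pi.sup_apply, Pi.add_apply, Pi.smul_apply, smul_eq_mul]
    fun_prop

def dominanceRegion (v w : ι → ℝ) (i j : ι) : Set (ℝ × ℝ) :=
  {p | p.2 * w i ≤ p.1 * v i ∧ p.1 * v j ≤ p.2 * w j}

theorem supRays_injOn_dominanceRegion {a v w : ι → ℝ} {i j : ι} (hvi : 0 < v i)
    (hwj : 0 < w j) : InjOn (supRays a v w) (dominanceRegion v w i j) := by
  have apply_i : ∀ p ∈ dominanceRegion v w i j, supRays a v w p i = a i + p.1 * v i :=
    fun p hp => max_eq_left (add_le_add_right hp.1 _)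
  have apply_j : ∀ p ∈ dominanceRegion v w i j, supRays a v w p j = a j + p.2 * w j :=
    fun p hp => max_eq_right (add_le_add_right hp.2 _)
  intro p hp p' hp' heq
  have hi := congrFun heq i
  have hj := congrFun heq j
  rw [apply_i p hp, apply_i p' hp'] at hi
  rw [apply_j p hp, apply_j p' hp'] at hj
  exact Prod.ext (mul_right_cancel₀ hvi.ne' (add_left_cancel hi))
    (mul_right_cancel₀ hwj.ne' (add_left_cancel hj))

theorem exists_nonneg_mapsTo_add_unitSquare_dominanceRegion {v w : ι → ℝ} {i j : ι}
    (hv : ∀ k, 0 ≤ v k) (hw : ∀ k, 0 ≤ w k) (hij : v j * w i < v i * w j) :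
    ∃ q : ℝ × ℝ, 0 ≤ q ∧
      MapsTo (· + q) (Icc 0 1 ×ˢ Icc 0 1) (dominanceRegion v w i j) := by
  -- Both defining inequalities hold at `(w i + w j, v i + v j)` with slack `v i * w j - v j * w i`;
  -- scaling by `c` turns the slack into `w i + v j`, enough to absorb a unit square.
  have hδ : 0 < v i * w j - v j * w i := sub_pos.mpr hij
  obtain ⟨c, hc, hcδ⟩ : ∃ c : ℝ, 0 ≤ c ∧ c * (v i * w j - v j * w i) = w i + v j :=
    ⟨_, div_nonneg (add_nonneg (hw i) (hv j)) hδ.le, div_mul_cancel₀ _ hδ.ne'⟩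
  refine ⟨(c * (w i + w j), c * (v i + v j)),
    ⟨mul_nonneg hc (add_nonneg (hw i) (hw j)), mul_nonneg hc (add_nonneg (hv i) (hv j))⟩, ?_⟩
  rintro p ⟨⟨hx0, hx1⟩, hy0, hy1⟩
  simp only [dominanceRegion, mem_ofPred_eq, Prod.fst_add, Prod.snd_add]
  constructor
  · linarith [mul_le_of_le_one_left (hw i) hy1, mul_nonneg hx0 (hv i), hv j]
  · linarith [mul_le_of_le_one_left (hv j) hx1, mul_nonneg hy0 (hw j), hw i]

/-- If `v, w` are linearly independent vectors in `ℝⁿ` with nonnegative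
coordinates, then the set of coordinatewise maxima `(a + s·v) ⊔ (a + t·w)`,
`s, t ≥ 0`, contains the image of an injective continuous map of the closed unit
square, hence a subset homeomorphic to `[0,1]²`. -/
theorem sup_rays_contains_square {n : ℕ} (a v w : Fin n → ℝ)
    (hvw : LinearIndependent ℝ ![v, w])
    (hv : ∀ i, 0 ≤ v i) (hw : ∀ i, 0 ≤ w i) :
    ∃ φ : (ℝ × ℝ) → (Fin n → ℝ),
      ContinuousOn φ (Set.Icc (0:ℝ) 1 ×ˢ Set.Icc (0:ℝ) 1) ∧
      Set.InjOn φ (Set.Icc (0:ℝ) 1 ×ˢ Set.Icc (0:ℝ) 1) ∧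
      φ '' (Set.Icc (0:ℝ) 1 ×ˢ Set.Icc (0:ℝ) 1) ⊆
        {z : Fin n → ℝ | ∃ s t : ℝ, 0 ≤ s ∧ 0 ≤ t ∧
          z = (a + s • v) ⊔ (a + t • w)} := by
  obtain ⟨i, j, hij⟩ := exists_mul_lt_mul_of_linearIndependent hvw
  have hvw_pos : 0 < v i * w j := (mul_nonneg (hv j) (hw i)).trans_lt hij
  obtain ⟨q, hq, hmaps⟩ := exists_nonneg_mapsTo_add_unitSquare_dominanceRegion hv hw hij
  refine ⟨supRays a v w ∘ (· + q),
    ((continuous_supRays a v w).comp (continuous_add_const q)).continuousOn,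
    (supRays_injOn_dominanceRegion (pos_of_mul_pos_left hvw_pos (hw j))
      (pos_of_mul_pos_right hvw_pos (hv i))).comp (add_left_injective q).injOn hmaps, ?_⟩
  rintro _ ⟨p, ⟨⟨hx, -⟩, hy, -⟩, rfl⟩
  exact ⟨p.1 + q.1, p.2 + q.2, add_nonneg hx hq.1, add_nonneg hy hq.2, rfl⟩
end
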